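/- The Christoffel symbols of the Kähler metric on the Siegel–Jacobi disk, determined by Σ_α h_{α\bar{ε}} Γ^α_{βγ} = ∂h_{\bar{ε}β}/∂z_γ, are: Γ^z_{zz} = -λ\bar{η}, Γ^w_{zz} = λ, Γ^z_{zw} = -λ\bar{η}² + \bar{w}/P, Γ^w_{zw} = λ\bar{η}, Γ^z_{ww} = -λ\bar{η}³, Γ^w_{ww} = λ\bar{η}² + 2\bar{w}/P, where λ = μ/(2k), P = 1-w\bar{w}, η = (z+\bar{z}w)/P. -/

import Mathlib

/-! The coefficients are rational functions of the independent variables `z, z̄, w, w̄`, so each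
identity amounts to one holomorphic partial derivative of a coefficient, taken with `z̄, w̄` held
fixed, followed by clearing the denominators `k` and `P = 1 - w w̄`, which is nonzero on the disk. -/

open Complex

/-- Polarized metric coefficients of the Siegel–Jacobi disk, holomorphic functions of
the independent variables `(z, z̄, w, w̄)`: `h_{z z̄}`, `h_{z w̄}`, `h_{w z̄}`, `h_{w w̄}`. -/
noncomputable def sjHzz (μ : ℝ) (_z _zb _w wb : ℂ) : ℂ := (μ : ℂ) / (1 - _w * wb)

noncomputable def sjHzw (μ : ℝ) (z zb w wb : ℂ) : ℂ :=
  (μ : ℂ) * ((z + zb * w) / (1 - w * wb)) / (1 - w * wb)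

noncomputable def sjHwz (μ : ℝ) (z zb w wb : ℂ) : ℂ :=
  (μ : ℂ) * ((zb + z * wb) / (1 - w * wb)) / (1 - w * wb)

noncomputable def sjHww (k μ : ℝ) (z zb w wb : ℂ) : ℂ :=
  (μ : ℂ) * ((z + zb * w) / (1 - w * wb)) * ((zb + z * wb) / (1 - w * wb)) /
      (1 - w * wb) + 2 * (k : ℂ) / (1 - w * wb) ^ 2

theorem one_sub_mul_conj_ne_zero {w : ℂ} (hw : ‖w‖ < 1) : 1 - w * starRingEnd ℂ w ≠ 0 := by
  rw [mul_conj, ← ofReal_one, ← ofReal_sub, ofReal_ne_zero, sub_ne_zero, normSq_eq_norm_sq]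
  nlinarith [norm_nonneg w]

section Derivatives

variable (k μ : ℝ) {z zb w wb : ℂ}

theorem hasDerivAt_one_sub_mul (wb w : ℂ) : HasDerivAt (fun b : ℂ => 1 - b * wb) (-wb) w := by
  simpa using ((hasDerivAt_id w).mul_const wb).const_sub 1

theorem deriv_sjHzz_z : deriv (fun a => sjHzz μ a zb w wb) z = 0 :=
  deriv_const z _

theorem hasDerivAt_sjHzw_z :
    HasDerivAt (fun a => sjHzw μ a zb w wb) (μ / (1 - w * wb) ^ 2) z := by
  refine ((((hasDerivAt_id z).add_const (zb * w)).div_const (1 - w * wb)).const_mul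
    (μ : ℂ)).div_const (1 - w * wb) |>.congr_deriv ?_
  field_simp

theorem hasDerivAt_sjHwz_z :
    HasDerivAt (fun a => sjHwz μ a zb w wb) (μ * wb / (1 - w * wb) ^ 2) z := by
  refine (((((hasDerivAt_id z).mul_const wb).const_add zb).div_const (1 - w * wb)).const_mul
    (μ : ℂ)).div_const (1 - w * wb) |>.congr_deriv ?_
  field_simp

theorem hasDerivAt_sjHww_z :
    HasDerivAt (fun a => sjHww k μ a zb w wb)
      (μ * ((zb + z * wb) + (z + zb * w) * wb) / (1 - w * wb) ^ 3) z := by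
  have hη := (((hasDerivAt_id z).add_const (zb * w)).div_const (1 - w * wb)).const_mul (μ : ℂ)
  have hηb := (((hasDerivAt_id z).mul_const wb).const_add zb).div_const (1 - w * wb)
  refine ((hη.mul hηb).div_const (1 - w * wb)).add_const (2 * (k : ℂ) / (1 - w * wb) ^ 2)
    |>.congr_deriv ?_
  simp only [id]
  field_simp

theorem hasDerivAt_sjHwz_w (hP : 1 - w * wb ≠ 0) :
    HasDerivAt (fun b => sjHwz μ z zb b wb)
      (2 * μ * wb * (zb + z * wb) / (1 - w * wb) ^ 3) w := by
  have hden := hasDerivAt_one_sub_mul wb w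
  refine (((hasDerivAt_const w (zb + z * wb)).div hden hP).const_mul (μ : ℂ)).div hden hP
    |>.congr_deriv ?_
  simp only [Pi.div_apply]
  field_simp
  ring

theorem hasDerivAt_sjHww_w (hP : 1 - w * wb ≠ 0) :
    HasDerivAt (fun b => sjHww k μ z zb b wb)
      ((μ * zb * (zb + z * wb) * (1 - w * wb) + 3 * μ * wb * (z + zb * w) * (zb + z * wb)
        + 4 * k * wb * (1 - w * wb)) / (1 - w * wb) ^ 4) w := by
  have hden := hasDerivAt_one_sub_mul wb w
  have hη := ((((hasDerivAt_id w).const_mul zb).const_add z).div hden hP).const_mul (μ : ℂ)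
  have hηb := (hasDerivAt_const w (zb + z * wb)).div hden hP
  have hκ := (hasDerivAt_const w (2 * (k : ℂ))).div (hden.pow 2) (pow_ne_zero 2 hP)
  refine ((hη.mul hηb).div hden hP).add hκ |>.congr_deriv ?_
  simp only [Pi.div_apply, Pi.mul_apply, Pi.pow_apply, id]
  field_simp
  ring

end Derivatives

theorem siegelJacobi_christoffel_general (k μ : ℝ) (hk : 0 < k)
    (z w : ℂ) (hw : ‖w‖ < 1) :
    let zb := starRingEnd ℂ z
    let wb := starRingEnd ℂ w
    let P : ℂ := 1 - w * wb
    let ηb : ℂ := (zb + z * wb) / P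
    let l : ℂ := (μ : ℂ) / (2 * (k : ℂ))
    let hzz := sjHzz μ z zb w wb
    let hzw := sjHzw μ z zb w wb
    let hwz := sjHwz μ z zb w wb
    let hww := sjHww k μ z zb w wb
    let Γzzz : ℂ := -l * ηb
    let Γwzz : ℂ := l
    let Γzzw : ℂ := -l * ηb ^ 2 + wb / P
    let Γwzw : ℂ := l * ηb
    let Γzww : ℂ := -l * ηb ^ 3
    let Γwww : ℂ := l * ηb ^ 2 + 2 * wb / P
    (hzz * Γzzz + hwz * Γwzz = deriv (fun a => sjHzz μ a zb w wb) z) ∧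
    (hzw * Γzzz + hww * Γwzz = deriv (fun a => sjHzw μ a zb w wb) z) ∧
    (hzz * Γzzw + hwz * Γwzw = deriv (fun a => sjHwz μ a zb w wb) z) ∧
    (hzw * Γzzw + hww * Γwzw = deriv (fun a => sjHww k μ a zb w wb) z) ∧
    (hzz * Γzww + hwz * Γwww = deriv (fun b => sjHwz μ z zb b wb) w) ∧
    (hzw * Γzww + hww * Γwww = deriv (fun b => sjHww k μ z zb b wb) w) := by
  intro zb wb P ηb l hzz hzw hwz hww Γzzz Γwzz Γzzw Γwzw Γzww Γwww
  have hP : 1 - w * wb ≠ 0 := one_sub_mul_conj_ne_zero hw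
  have hk₀ : (k : ℂ) ≠ 0 := ofReal_ne_zero.mpr hk.ne'
  rw [deriv_sjHzz_z, (hasDerivAt_sjHzw_z μ).deriv, (hasDerivAt_sjHwz_z μ).deriv,
    (hasDerivAt_sjHww_z k μ).deriv, (hasDerivAt_sjHwz_w μ hP).deriv,
    (hasDerivAt_sjHww_w k μ hP).deriv]
  simp only [hzz, hzw, hwz, hww, Γzzz, Γwzz, Γzzw, Γwzw, Γzww, Γwww, l, ηb, P,
    sjHzz, sjHzw, sjHwz, sjHww]
  refine ⟨?_, ?_, ?_, ?_, ?_, ?_⟩ <;> field_simp <;> ring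

/-- The Christoffel symbols of the Kähler metric on the Siegel–Jacobi disk,
`Γ^z_{zz} = -λ η̄`, `Γ^w_{zz} = λ`, `Γ^z_{zw} = -λ η̄² + w̄/P`, `Γ^w_{zw} = λ η̄`,
`Γ^z_{ww} = -λ η̄³`, `Γ^w_{ww} = λ η̄² + 2 w̄/P` with `λ = μ/(2k)`, satisfy the defining
linear systems `Σ_α h_{α ε̄} Γ^α_{βγ} = ∂ h_{β ε̄}/∂ z_γ` (Wirtinger derivatives being
complex derivatives of the polarized coefficients). -/
theorem siegelJacobi_christoffel (k μ : ℝ) (hk : 0 < k) (hμ : 0 < μ)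
    (z w : ℂ) (hw : ‖w‖ < 1) :
    let zb := starRingEnd ℂ z
    let wb := starRingEnd ℂ w
    let P : ℂ := 1 - w * wb
    let ηb : ℂ := (zb + z * wb) / P
    let l : ℂ := (μ : ℂ) / (2 * (k : ℂ))
    let hzz := sjHzz μ z zb w wb
    let hzw := sjHzw μ z zb w wb
    let hwz := sjHwz μ z zb w wb
    let hww := sjHww k μ z zb w wb
    let Γzzz : ℂ := -l * ηb
    let Γwzz : ℂ := l
    let Γzzw : ℂ := -l * ηb ^ 2 + wb / P
    let Γwzw : ℂ := l * ηb
    let Γzww : ℂ := -l * ηb ^ 3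
    let Γwww : ℂ := l * ηb ^ 2 + 2 * wb / P
    (hzz * Γzzz + hwz * Γwzz = deriv (fun a => sjHzz μ a zb w wb) z) ∧
    (hzw * Γzzz + hww * Γwzz = deriv (fun a => sjHzw μ a zb w wb) z) ∧
    (hzz * Γzzw + hwz * Γwzw = deriv (fun a => sjHwz μ a zb w wb) z) ∧
    (hzw * Γzzw + hww * Γwzw = deriv (fun a => sjHww k μ a zb w wb) z) ∧
    (hzz * Γzww + hwz * Γwww = deriv (fun b => sjHwz μ z zb b wb) w) ∧
    (hzw * Γzww + hww * Γwww = deriv (fun b => sjHww k μ z zb b wb) w) :=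
  siegelJacobi_christoffel_general k μ hk z w hw
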